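/- arXiv:2312.15735 — 7 statements merged into one kernel-verified Lean document; each statement's English description precedes it below -/
import Mathlib

section
/- Let p > 2 with 2 < p ≤ 3. Then there exists a constant C > 0, depending only on p and n, such that for all vectors x, y ∈ ℝⁿ: | |x+y|^{p-2} (x+y)·y − |x|^{p-2} (x+y)·y − (p−2)|x|^{p-4} (x·y)² | ≤ C|y|^p. -/
/-!
Write `α = p - 2 ∈ (0, 1]`, `s = ‖x‖`, `t = ‖x + y‖`, `b = ‖y‖`, `u = ⟪x, y⟫`; the quantity becomes
`(t ^ α - s ^ α) (u + b²) - α s ^ (α - 2) u²`, with `|t - s| ≤ b`, `|u| ≤ s b` and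
`t² = s² + 2u + b²`. When `s ≤ 2b` each term is `O(b ^ (α + 2))`, by the `α`-Hölder continuity
of `t ↦ t ^ α`. When `s > 2b`, expand `t ^ α` to first order at `s`, with a second-order remainder
from Bernoulli's inequality; the first-order term cancels `α s ^ (α - 2) u²` up to
`O(s ^ (α - 1) b³)` because `s (t - s)` differs from `u` by at most `b² / 2`.
-/

namespace Real

variable {α s t b u : ℝ}

theorem abs_rpow_sub_rpow_le (hα0 : 0 ≤ α) (hα1 : α ≤ 1) (hs : 0 ≤ s) (ht : 0 ≤ t) :
    |t ^ α - s ^ α| ≤ |t - s| ^ α := by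
  wlog hst : s ≤ t generalizing s t
  · rw [abs_sub_comm, abs_sub_comm t]
    exact this ht hs (le_of_not_ge hst)
  have h := rpow_add_le_add_rpow hs (sub_nonneg.2 hst) hα0 hα1
  rw [add_sub_cancel] at h
  rw [abs_of_nonneg (sub_nonneg.2 (rpow_le_rpow hs hst hα0)), abs_of_nonneg (sub_nonneg.2 hst)]
  linarith

theorem abs_one_add_rpow_sub_le {h : ℝ} (hh : |h| ≤ 1 / 2) (hα0 : 0 ≤ α) (hα1 : α ≤ 1) :
    |(1 + h) ^ α - 1 - α * h| ≤ h ^ 2 := by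
  obtain ⟨hh₁, hh₂⟩ := abs_le.mp hh
  have hpos : 0 < 1 + h := by linarith
  have upper : (1 + h) ^ α ≤ 1 + α * h :=
    rpow_one_add_le_one_add_mul_self (by linarith) hα0 hα1
  -- the lower bound comes from the upper bound for the complementary exponent `1 - α`
  have upper' : (1 + h) ^ (1 - α) ≤ 1 + (1 - α) * h :=
    rpow_one_add_le_one_add_mul_self (by linarith) (by linarith) (by linarith)
  have rpow_mul_rpow : (1 + h) ^ α * (1 + h) ^ (1 - α) = 1 + h := by
    rw [← rpow_add hpos, add_sub_cancel, rpow_one]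
  have lower : 1 + h ≤ (1 + h) ^ α * (1 + (1 - α) * h) := by
    calc 1 + h = (1 + h) ^ α * (1 + h) ^ (1 - α) := rpow_mul_rpow.symm
      _ ≤ (1 + h) ^ α * (1 + (1 - α) * h) :=
        mul_le_mul_of_nonneg_left upper' (rpow_nonneg hpos.le α)
  have hD : 0 < 1 + (1 - α) * h := by nlinarith
  have hDα : 0 ≤ 1 + (1 - α) * h - α * (1 - α) := by nlinarith
  rw [abs_le]
  constructor
  · by_contra! hlt
    nlinarith [mul_pos (by linarith : 0 < 1 + α * h - h ^ 2 - (1 + h) ^ α) hD,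
      mul_nonneg (sq_nonneg h) hDα]
  · nlinarith [sq_nonneg h]

theorem abs_rpow_sub_tangent_le (hα0 : 0 ≤ α) (hα1 : α ≤ 1) (hs : 0 < s) (hts : |t - s| ≤ s / 2) :
    |t ^ α - s ^ α - α * s ^ (α - 1) * (t - s)| ≤ s ^ (α - 2) * (t - s) ^ 2 := by
  obtain ⟨h, rfl⟩ : ∃ h, t = s * (1 + h) := ⟨(t - s) / s, by field_simp; ring⟩
  have hh : |h| ≤ 1 / 2 := by
    rw [show s * (1 + h) - s = s * h by ring, abs_mul, abs_of_pos hs] at hts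
    nlinarith
  have hsα := rpow_nonneg hs.le α
  calc |(s * (1 + h)) ^ α - s ^ α - α * s ^ (α - 1) * (s * (1 + h) - s)|
      = s ^ α * |(1 + h) ^ α - 1 - α * h| := by
        rw [← abs_of_nonneg hsα, ← abs_mul, abs_of_nonneg hsα, rpow_sub_one hs.ne',
          mul_rpow hs.le (by linarith [(abs_le.mp hh).1])]
        congr 1
        field_simp
        ring
    _ ≤ s ^ α * h ^ 2 := mul_le_mul_of_nonneg_left (abs_one_add_rpow_sub_le hh hα0 hα1) hsα
    _ = s ^ (α - 2) * (s * (1 + h) - s) ^ 2 := by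
        rw [rpow_sub hs, rpow_two]
        field_simp
        ring

theorem rpow_sub_two_mul_sq (hs : 0 ≤ s) (hα : α ≠ 0) : s ^ (α - 2) * s ^ 2 = s ^ α := by
  rw [← rpow_natCast, ← rpow_add' hs] <;> norm_num [hα]

theorem rpow_sub_one_mul_le (hb : 0 ≤ b) (hbs : b ≤ s) (hα : α ≤ 1) : s ^ (α - 1) * b ≤ b ^ α := by
  rcases hb.eq_or_lt with rfl | hb
  · simpa using rpow_nonneg le_rfl α
  calc s ^ (α - 1) * b ≤ b ^ (α - 1) * b :=
        mul_le_mul_of_nonneg_right (rpow_le_rpow_of_nonpos hb hbs (by linarith)) hb.le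
    _ = b ^ α := by rw [rpow_sub_one hb.ne', div_mul_cancel₀ _ hb.ne']

end Real

section Remainder

open Real

variable {α s t b u : ℝ}

theorem remainder_le_of_le_two_mul (hα0 : 0 < α) (hα1 : α ≤ 1) (hs : 0 ≤ s) (ht : 0 ≤ t)
    (hts : |t - s| ≤ b) (hu : |u| ≤ s * b) (hsb : s ≤ 2 * b) :
    |(t ^ α - s ^ α) * (u + b ^ 2) - α * s ^ (α - 2) * u ^ 2| ≤ 5 * (b ^ α * b ^ 2) := by
  have hb : 0 ≤ b := (abs_nonneg _).trans hts
  have hdiff : |t ^ α - s ^ α| ≤ b ^ α :=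
    (abs_rpow_sub_rpow_le hα0.le hα1 hs ht).trans (rpow_le_rpow (abs_nonneg _) hts hα0.le)
  have hub : |u + b ^ 2| ≤ 3 * b ^ 2 := by
    rw [abs_le] at hu ⊢
    constructor <;> nlinarith
  have hsα : s ^ α ≤ 2 * b ^ α :=
    calc s ^ α ≤ (2 * b) ^ α := rpow_le_rpow hs hsb hα0.le
      _ = 2 ^ α * b ^ α := mul_rpow zero_le_two hb
      _ ≤ 2 * b ^ α := by
        gcongr
        simpa using rpow_le_rpow_of_exponent_le one_le_two hα1
  have hP := rpow_nonneg hs (α - 2)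
  have hu2 : u ^ 2 ≤ (s * b) ^ 2 := sq_le_sq' (abs_le.mp hu).1 (abs_le.mp hu).2
  have hcorr : α * s ^ (α - 2) * u ^ 2 ≤ 2 * (b ^ α * b ^ 2) :=
    calc α * s ^ (α - 2) * u ^ 2 ≤ s ^ (α - 2) * (s * b) ^ 2 := by
          nlinarith [mul_le_mul_of_nonneg_left hu2 hP,
            mul_le_mul_of_nonneg_right hα1 (mul_nonneg hP (sq_nonneg u))]
      _ = s ^ α * b ^ 2 := by rw [mul_pow, ← mul_assoc, rpow_sub_two_mul_sq hs hα0.ne']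
      _ ≤ 2 * b ^ α * b ^ 2 := by gcongr
      _ = 2 * (b ^ α * b ^ 2) := by ring
  calc |(t ^ α - s ^ α) * (u + b ^ 2) - α * s ^ (α - 2) * u ^ 2|
      ≤ |t ^ α - s ^ α| * |u + b ^ 2| + α * s ^ (α - 2) * u ^ 2 := by
        refine (abs_sub _ _).trans ?_
        rw [abs_mul, abs_of_nonneg (by positivity : 0 ≤ α * s ^ (α - 2) * u ^ 2)]
    _ ≤ b ^ α * (3 * b ^ 2) + 2 * (b ^ α * b ^ 2) :=
        add_le_add (mul_le_mul hdiff hub (abs_nonneg _) (rpow_nonneg hb _)) hcorr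
    _ = 5 * (b ^ α * b ^ 2) := by ring

theorem remainder_le_of_two_mul_lt (hα0 : 0 < α) (hα1 : α ≤ 1) (hts : |t - s| ≤ b)
    (hu : |u| ≤ s * b) (hsq : t ^ 2 = s ^ 2 + 2 * u + b ^ 2) (hsb : 2 * b < s) :
    |(t ^ α - s ^ α) * (u + b ^ 2) - α * s ^ (α - 2) * u ^ 2| ≤ 3 * (b ^ α * b ^ 2) := by
  have hb : 0 ≤ b := (abs_nonneg _).trans hts
  have hs : 0 < s := by linarith
  set P := s ^ (α - 2)
  have hP : 0 ≤ P := rpow_nonneg hs.le _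
  have hs1 : s ^ (α - 1) = P * s := by rw [← rpow_add_one hs.ne']; ring_nf
  set R := t ^ α - s ^ α - α * s ^ (α - 1) * (t - s)
  have hR : |R| ≤ P * b ^ 2 := by
    refine (abs_rpow_sub_tangent_le hα0.le hα1 hs (hts.trans (by linarith))).trans ?_
    exact mul_le_mul_of_nonneg_left (sq_le_sq' (abs_le.mp hts).1 (abs_le.mp hts).2) hP
  -- by `hsq`, `s * (t - s) - u = (b ^ 2 - (t - s) ^ 2) / 2`
  have hcan : |s * (t - s) - u| ≤ b ^ 2 / 2 := by
    rw [abs_le]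
    constructor <;> nlinarith [sq_nonneg (t - s), sq_le_sq' (abs_le.mp hts).1 (abs_le.mp hts).2]
  have hub : |u + b ^ 2| ≤ s * b + b ^ 2 := by
    rw [abs_le] at hu ⊢
    constructor <;> nlinarith
  have T1 : |R * (u + b ^ 2)| ≤ P * b ^ 2 * (s * b + b ^ 2) := by
    rw [abs_mul]; exact mul_le_mul hR hub (abs_nonneg _) (by positivity)
  have T2 : |α * P * s * (t - s) * b ^ 2| ≤ P * s * b * b ^ 2 := by
    rw [abs_mul, abs_mul, abs_mul, abs_mul, abs_of_pos hα0, abs_of_nonneg hP, abs_of_pos hs,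
      abs_of_nonneg (sq_nonneg b)]
    calc α * P * s * |t - s| * b ^ 2 ≤ 1 * P * s * b * b ^ 2 := by gcongr
      _ = P * s * b * b ^ 2 := by ring
  have T3 : |α * P * u * (s * (t - s) - u)| ≤ P * (s * b) * (b ^ 2 / 2) := by
    rw [abs_mul, abs_mul, abs_mul, abs_of_pos hα0, abs_of_nonneg hP]
    calc α * P * |u| * |s * (t - s) - u| ≤ 1 * P * (s * b) * (b ^ 2 / 2) := by gcongr
      _ = P * (s * b) * (b ^ 2 / 2) := by ring
  have e : (t ^ α - s ^ α) * (u + b ^ 2) - α * P * u ^ 2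
      = R * (u + b ^ 2) + α * P * s * (t - s) * b ^ 2 + α * P * u * (s * (t - s) - u) := by
    simp only [R, hs1]; ring
  calc |(t ^ α - s ^ α) * (u + b ^ 2) - α * P * u ^ 2|
      ≤ P * b ^ 2 * (s * b + b ^ 2) + P * s * b * b ^ 2 + P * (s * b) * (b ^ 2 / 2) := by
        rw [e]
        exact (abs_add_le _ _).trans (add_le_add ((abs_add_le _ _).trans (add_le_add T1 T2)) T3)
    _ ≤ 3 * (s ^ (α - 1) * b * b ^ 2) := by
        rw [hs1]; nlinarith [mul_le_mul_of_nonneg_left hsb.le (by positivity : 0 ≤ P * b ^ 3)]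
    _ ≤ 3 * (b ^ α * b ^ 2) := by
        gcongr
        exact rpow_sub_one_mul_le hb (by linarith : b ≤ s) hα1

theorem remainder_le (hα0 : 0 < α) (hα1 : α ≤ 1) (hs : 0 ≤ s) (ht : 0 ≤ t)
    (hts : |t - s| ≤ b) (hu : |u| ≤ s * b) (hsq : t ^ 2 = s ^ 2 + 2 * u + b ^ 2) :
    |(t ^ α - s ^ α) * (u + b ^ 2) - α * s ^ (α - 2) * u ^ 2| ≤ 5 * (b ^ α * b ^ 2) := by
  rcases le_or_gt s (2 * b) with hsb | hsb
  · exact remainder_le_of_le_two_mul hα0 hα1 hs ht hts hu hsb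
  · have hb : 0 ≤ b := (abs_nonneg _).trans hts
    have : 0 ≤ b ^ α * b ^ 2 := by positivity
    linarith [remainder_le_of_two_mul_lt hα0 hα1 hts hu hsq hsb]

end Remainder

-- At `x = 0` the last term vanishes because `Real.rpow` gives `0 ^ (p - 4) = 0`.
theorem abs_norm_add_rpow_mul_inner_sub_le {E : Type*} [NormedAddCommGroup E]
    [InnerProductSpace ℝ E] {p : ℝ} (hp : 2 < p) (hp' : p ≤ 3) (x y : E) :
    |‖x + y‖ ^ (p - 2) * inner ℝ (x + y) y - ‖x‖ ^ (p - 2) * inner ℝ (x + y) y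
      - (p - 2) * ‖x‖ ^ (p - 4) * inner ℝ x y ^ 2| ≤ 5 * ‖y‖ ^ p := by
  have h := remainder_le (α := p - 2) (by linarith) (by linarith) (norm_nonneg x)
    (norm_nonneg (x + y)) (by simpa using abs_norm_sub_norm_le (x + y) x)
    (abs_real_inner_le_norm x y) (norm_add_sq_real x y)
  rw [inner_add_left, real_inner_self_eq_norm_sq, show p - 4 = p - 2 - 2 by ring,
    ← Real.rpow_sub_two_mul_sq (norm_nonneg y) (by linarith : p ≠ 0)]
  convert h using 2
  ring

theorem stmt1 (n : ℕ) (p : ℝ) (hp : 2 < p) (hp' : p ≤ 3) :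
    ∃ C > (0:ℝ), ∀ x y : EuclideanSpace ℝ (Fin n),
      |‖x + y‖ ^ (p - 2) * (inner ℝ (x + y) y : ℝ)
        - ‖x‖ ^ (p - 2) * (inner ℝ (x + y) y : ℝ)
        - (p - 2) * ‖x‖ ^ (p - 4) * (inner ℝ x y : ℝ) ^ 2| ≤ C * ‖y‖ ^ p :=
  ⟨5, by norm_num, abs_norm_add_rpow_mul_inner_sub_le hp hp'⟩
end

section
/- Let p > 3. Then there exists a constant C > 0, depending only on p and n, such that for all vectors x, y ∈ ℝⁿ: | |x+y|^{p-2} (x+y)·y − |x|^{p-2} (x+y)·y − (p−2)|x|^{p-4} (x·y)² | ≤ C(|y|^p + |x|^{p-3}|y|³). -/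
/-!
Write `t = ‖x‖`, `r = ‖y‖`, `a = ⟪x, y⟫`, `s = ‖x + y‖`; then `s² = t² + 2a + r²` and
`|a| ≤ t r`, so the estimate is a statement about four reals. When `t ≤ 2r` each of the three
terms is `O(r^p)`. When `2r < t`, `s²` lies in `[t²/4, 9t²/4]`, and the second-order Taylor
expansion of `u ↦ u^κ`, `κ = (p - 2)/2`, at `u = t²` splits the expression into the Taylor
remainder times `a + r²` plus `κ t^(p-4) (3 a r² + r⁴)`; both are `O(t^(p-3) r³)`.
-/

open Real Set

lemma sq_rpow {t : ℝ} (ht : 0 ≤ t) (z : ℝ) : (t ^ 2) ^ z = t ^ (2 * z) := by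
  rw [← rpow_natCast_mul ht]; norm_num

lemma rpow_le_rpow_add_rpow_of_mem_Icc {m M u : ℝ} (z : ℝ) (hm : 0 < m) (hu : u ∈ Icc m M) :
    u ^ z ≤ m ^ z + M ^ z := by
  have hm' : 0 ≤ m ^ z := rpow_nonneg hm.le z
  have hM' : 0 ≤ M ^ z := rpow_nonneg (hm.le.trans (hu.1.trans hu.2)) z
  rcases le_or_gt 0 z with hz | hz
  · linarith [rpow_le_rpow (hm.le.trans hu.1) hu.2 hz]
  · linarith [rpow_le_rpow_of_nonpos hm hu.1 hz.le]

lemma abs_rpow_sub_rpow_le_of_mem_Icc {m M a b : ℝ} (r : ℝ) (hm : 0 < m) (ha : a ∈ Icc m M)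
    (hb : b ∈ Icc m M) : |a ^ r - b ^ r| ≤ |r| * (m ^ (r - 1) + M ^ (r - 1)) * |a - b| := by
  have hderiv : ∀ u ∈ Icc m M, HasDerivWithinAt (· ^ r) (r * u ^ (r - 1)) (Icc m M) u :=
    fun u hu ↦ (hasDerivAt_rpow_const (Or.inl (hm.trans_le hu.1).ne')).hasDerivWithinAt
  have hbound : ∀ u ∈ Icc m M, ‖r * u ^ (r - 1)‖ ≤ |r| * (m ^ (r - 1) + M ^ (r - 1)) := by
    intro u hu
    rw [norm_mul, norm_eq_abs, norm_eq_abs, abs_of_nonneg (rpow_nonneg (hm.le.trans hu.1) _)]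
    exact mul_le_mul_of_nonneg_left (rpow_le_rpow_add_rpow_of_mem_Icc _ hm hu) (abs_nonneg r)
  simpa only [norm_eq_abs] using
    (convex_Icc m M).norm_image_sub_le_of_norm_hasDerivWithin_le hderiv hbound hb ha

lemma abs_sub_sub_mul_sub_le_of_hasDerivWithinAt {f f' : ℝ → ℝ} {s : Set ℝ} {L v w : ℝ}
    (hs : Convex ℝ s) (hf : ∀ u ∈ s, HasDerivWithinAt f (f' u) s u) (hL : 0 ≤ L)
    (hf' : ∀ u ∈ s, |f' u - f' w| ≤ L * |u - w|) (hw : w ∈ s) (hv : v ∈ s) :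
    |f v - f w - f' w * (v - w)| ≤ L * (v - w) ^ 2 := by
  have hsub : uIcc w v ⊆ s := hs.ordConnected.uIcc_subset hw hv
  have hderiv : ∀ u ∈ uIcc w v,
      HasDerivWithinAt (fun u ↦ f u - f' w * u) (f' u - f' w) (uIcc w v) u := fun u hu ↦ by
    simpa using ((hf u (hsub hu)).mono hsub).fun_sub ((hasDerivWithinAt_id u _).const_mul (f' w))
  have hbound : ∀ u ∈ uIcc w v, ‖f' u - f' w‖ ≤ L * |v - w| := fun u hu ↦
    (hf' u (hsub hu)).trans (mul_le_mul_of_nonneg_left (abs_sub_left_of_mem_uIcc hu) hL)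
  have := (convex_uIcc w v).norm_image_sub_le_of_norm_hasDerivWithin_le hderiv hbound
    left_mem_uIcc right_mem_uIcc
  rw [norm_eq_abs, norm_eq_abs] at this
  calc |f v - f w - f' w * (v - w)| = |f v - f' w * v - (f w - f' w * w)| := by ring_nf
    _ ≤ L * |v - w| * |v - w| := this
    _ = L * (v - w) ^ 2 := by rw [mul_assoc, ← sq, sq_abs]

lemma abs_rpow_sub_rpow_sub_mul_le_of_mem_Icc {m M v w : ℝ} (κ : ℝ) (hm : 0 < m)
    (hv : v ∈ Icc m M) (hw : w ∈ Icc m M) :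
    |v ^ κ - w ^ κ - κ * w ^ (κ - 1) * (v - w)|
      ≤ |κ| * |κ - 1| * (m ^ (κ - 2) + M ^ (κ - 2)) * (v - w) ^ 2 := by
  have hderiv : ∀ u ∈ Icc m M, HasDerivWithinAt (· ^ κ) (κ * u ^ (κ - 1)) (Icc m M) u :=
    fun u hu ↦ (hasDerivAt_rpow_const (Or.inl (hm.trans_le hu.1).ne')).hasDerivWithinAt
  have hlip : ∀ u ∈ Icc m M, |κ * u ^ (κ - 1) - κ * w ^ (κ - 1)|
      ≤ |κ| * |κ - 1| * (m ^ (κ - 2) + M ^ (κ - 2)) * |u - w| := fun u hu ↦ by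
    have := abs_rpow_sub_rpow_le_of_mem_Icc (κ - 1) hm hu hw
    rw [show κ - 1 - 1 = κ - 2 by ring] at this
    rw [← mul_sub, abs_mul, mul_assoc, mul_assoc, ← mul_assoc |κ - 1|]
    exact mul_le_mul_of_nonneg_left this (abs_nonneg κ)
  have hL : 0 ≤ |κ| * |κ - 1| * (m ^ (κ - 2) + M ^ (κ - 2)) := by
    have := rpow_nonneg hm.le (κ - 2)
    have := rpow_nonneg (hm.le.trans (hw.1.trans hw.2)) (κ - 2)
    positivity
  have := abs_sub_sub_mul_sub_le_of_hasDerivWithinAt (convex_Icc m M) hderiv hL hlip hw hv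
  simpa only [mul_assoc] using this

noncomputable def taylorDefect (p t r a s : ℝ) : ℝ :=
  s ^ (p - 2) * (a + r ^ 2) - t ^ (p - 2) * (a + r ^ 2) - (p - 2) * t ^ (p - 4) * a ^ 2

lemma rpow_sub_four_mul_sq_le {p t r a : ℝ} (ht : 0 ≤ t) (ha : |a| ≤ t * r) :
    t ^ (p - 4) * a ^ 2 ≤ t ^ (p - 2) * r ^ 2 := by
  rcases ht.eq_or_lt with rfl | ht
  · have : a = 0 := abs_nonpos_iff.1 (by simpa using ha)
    rw [this, zero_pow two_ne_zero, mul_zero]; positivity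
  have ha2 : a ^ 2 ≤ t ^ 2 * r ^ 2 := by
    rw [← mul_pow, ← sq_abs a]
    exact pow_le_pow_left₀ (abs_nonneg a) ha 2
  calc t ^ (p - 4) * a ^ 2 ≤ t ^ (p - 4) * (t ^ 2 * r ^ 2) :=
        mul_le_mul_of_nonneg_left ha2 (rpow_nonneg ht.le _)
    _ = t ^ (p - 2) * r ^ 2 := by
        rw [← mul_assoc, ← rpow_two, ← rpow_add ht]; ring_nf

lemma abs_taylorDefect_le_of_le_two_mul {p t r a s : ℝ} (hp : 2 ≤ p) (ht : 0 ≤ t) (hr : 0 ≤ r)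
    (hs : 0 ≤ s) (htr : t ≤ 2 * r) (ha : |a| ≤ t * r) (hst : s ≤ t + r) :
    |taylorDefect p t r a s| ≤ (p + 4) * 3 ^ (p - 2) * r ^ p := by
  have hp2 : 0 ≤ p - 2 := by linarith
  have hsum : |a + r ^ 2| ≤ 3 * r ^ 2 := by
    have : t * r ≤ 2 * r * r := mul_le_mul_of_nonneg_right htr hr
    linarith [abs_add_le a (r ^ 2), abs_of_nonneg (sq_nonneg r)]
  have hs3 : s ^ (p - 2) ≤ (3 * r) ^ (p - 2) := rpow_le_rpow hs (by linarith) hp2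
  have ht3 : t ^ (p - 2) ≤ (3 * r) ^ (p - 2) := rpow_le_rpow ht (by linarith) hp2
  have hquad := rpow_sub_four_mul_sq_le (p := p) ht ha
  have hpow : (3 * r) ^ (p - 2) * r ^ 2 = 3 ^ (p - 2) * r ^ p := by
    rw [mul_rpow (by norm_num) hr, mul_assoc, ← rpow_two r, ← rpow_add' hr (by linarith)]
    ring_nf
  have hnn : 0 ≤ (3 * r) ^ (p - 2) := rpow_nonneg (by positivity) _
  have hZ : 0 ≤ (p - 2) * t ^ (p - 4) * a ^ 2 := by positivity
  calc |taylorDefect p t r a s|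
      ≤ |s ^ (p - 2) * (a + r ^ 2)| + |t ^ (p - 2) * (a + r ^ 2)|
          + |(p - 2) * t ^ (p - 4) * a ^ 2| := by
        unfold taylorDefect
        linarith [abs_sub (s ^ (p - 2) * (a + r ^ 2) - t ^ (p - 2) * (a + r ^ 2))
          ((p - 2) * t ^ (p - 4) * a ^ 2), abs_sub (s ^ (p - 2) * (a + r ^ 2))
          (t ^ (p - 2) * (a + r ^ 2))]
    _ = s ^ (p - 2) * |a + r ^ 2| + t ^ (p - 2) * |a + r ^ 2|
          + (p - 2) * (t ^ (p - 4) * a ^ 2) := by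
        rw [abs_mul, abs_mul, abs_of_nonneg (rpow_nonneg hs _), abs_of_nonneg (rpow_nonneg ht _),
          abs_of_nonneg hZ, mul_assoc]
    _ ≤ (3 * r) ^ (p - 2) * (3 * r ^ 2) + (3 * r) ^ (p - 2) * (3 * r ^ 2)
          + (p - 2) * ((3 * r) ^ (p - 2) * r ^ 2) := by
        have h1 := mul_le_mul hs3 hsum (abs_nonneg _) hnn
        have h2 := mul_le_mul ht3 hsum (abs_nonneg _) hnn
        have h3 := mul_le_mul_of_nonneg_left
          (hquad.trans (mul_le_mul_of_nonneg_right ht3 (sq_nonneg r))) hp2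
        linarith
    _ = (p + 4) * 3 ^ (p - 2) * r ^ p := by
        rw [mul_assoc, ← hpow]; ring

lemma exists_abs_taylorDefect_le_of_two_mul_lt (p : ℝ) :
    ∃ B, ∀ {t r a s : ℝ}, 0 ≤ r → 2 * r < t → |a| ≤ t * r → 0 ≤ s →
      s ^ 2 = t ^ 2 + 2 * a + r ^ 2 → |taylorDefect p t r a s| ≤ B * (t ^ (p - 3) * r ^ 3) := by
  obtain ⟨κ, hκ⟩ : ∃ κ, 2 * κ = p - 2 := ⟨(p - 2) / 2, by ring⟩
  set K := |κ| * |κ - 1| * ((1 / 4) ^ (κ - 2) + (9 / 4) ^ (κ - 2))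
  refine ⟨75 / 8 * K + 7 / 2 * |κ|, fun {t r a s} hr hrt ha hs hst ↦ ?_⟩
  have ht : 0 < t := by linarith
  obtain ⟨ha₁, ha₂⟩ := abs_le.1 ha
  set u := t ^ (p - 4)
  have hu : 0 ≤ u := rpow_nonneg ht.le _
  have hK : 0 ≤ K := by
    have := rpow_nonneg (show (0:ℝ) ≤ 1 / 4 by norm_num) (κ - 2)
    have := rpow_nonneg (show (0:ℝ) ≤ 9 / 4 by norm_num) (κ - 2)
    positivity
  have hS : s ^ 2 ∈ Icc (1 / 4 * t ^ 2) (9 / 4 * t ^ 2) := ⟨by nlinarith, by nlinarith⟩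
  have hT : t ^ 2 ∈ Icc (1 / 4 * t ^ 2) (9 / 4 * t ^ 2) := ⟨by nlinarith, by nlinarith⟩
  have taylor := abs_rpow_sub_rpow_sub_mul_le_of_mem_Icc κ (by positivity) hS hT
  have hut : u * t = t ^ (p - 3) := by rw [← rpow_add_one ht.ne']; ring_nf
  have htp : t ^ (p - 2) = u * t ^ 2 := by
    rw [← rpow_two, ← rpow_add ht]; ring_nf
  have hκ₁ : (t ^ 2) ^ (κ - 1) = u := by
    rw [sq_rpow ht.le, mul_sub, hκ, show p - 2 - 2 * 1 = p - 4 by ring]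
  have hκ₂ (c : ℝ) (hc : 0 ≤ c) : (c * t ^ 2) ^ (κ - 2) = c ^ (κ - 2) * (u / t ^ 2) := by
    rw [mul_rpow hc (sq_nonneg t), sq_rpow ht.le, mul_sub, hκ, ← rpow_two, ← rpow_sub ht]
    ring_nf
  rw [sq_rpow hs, sq_rpow ht.le, hκ, htp, hκ₁, hκ₂ _ (by norm_num), hκ₂ _ (by norm_num),
    show s ^ 2 - t ^ 2 = 2 * a + r ^ 2 by linarith] at taylor
  set R := s ^ (p - 2) - u * t ^ 2 - κ * u * (2 * a + r ^ 2) with hR_def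
  have hr2 : r ^ 2 ≤ t * r / 2 := by nlinarith
  have hR : |R| ≤ 25 / 4 * K * u * r ^ 2 := by
    have hh : (2 * a + r ^ 2) ^ 2 ≤ 25 / 4 * t ^ 2 * r ^ 2 := by
      nlinarith [sq_nonneg (2 * a + r ^ 2 - 5 / 2 * t * r),
        sq_nonneg (2 * a + r ^ 2 + 5 / 2 * t * r)]
    calc |R| ≤ K * u * ((2 * a + r ^ 2) ^ 2 / t ^ 2) := taylor.trans_eq (by ring)
      _ ≤ K * u * (25 / 4 * r ^ 2) := by
          gcongr
          rw [div_le_iff₀ (by positivity)]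
          linarith
      _ = 25 / 4 * K * u * r ^ 2 := by ring
  have hdefect : taylorDefect p t r a s = R * (a + r ^ 2) + κ * u * (3 * a * r ^ 2 + r ^ 4) := by
    unfold taylorDefect
    rw [htp, hR_def]
    linear_combination u * a ^ 2 * hκ
  have hsum : |a + r ^ 2| ≤ 3 / 2 * t * r := by
    rw [abs_le]; constructor <;> nlinarith
  have hcub : |3 * a * r ^ 2 + r ^ 4| ≤ 7 / 2 * t * r ^ 3 := by
    rw [abs_le]; constructor <;> nlinarith [sq_nonneg r]
  calc |taylorDefect p t r a s|
      ≤ |R * (a + r ^ 2)| + |κ * u * (3 * a * r ^ 2 + r ^ 4)| := hdefect ▸ abs_add_le _ _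
    _ = |R| * |a + r ^ 2| + |κ| * u * |3 * a * r ^ 2 + r ^ 4| := by
        rw [abs_mul, abs_mul, abs_mul, abs_of_nonneg hu]
    _ ≤ 25 / 4 * K * u * r ^ 2 * (3 / 2 * t * r) + |κ| * u * (7 / 2 * t * r ^ 3) := by
        gcongr
    _ = (75 / 8 * K + 7 / 2 * |κ|) * (u * t * r ^ 3) := by ring
    _ = (75 / 8 * K + 7 / 2 * |κ|) * (t ^ (p - 3) * r ^ 3) := by rw [hut]

lemma exists_abs_taylorDefect_le {p : ℝ} (hp : 2 ≤ p) :
    ∃ C > 0, ∀ {t r a s : ℝ}, 0 ≤ t → 0 ≤ r → |a| ≤ t * r → 0 ≤ s →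
      s ^ 2 = t ^ 2 + 2 * a + r ^ 2 →
        |taylorDefect p t r a s| ≤ C * (r ^ p + t ^ (p - 3) * r ^ 3) := by
  obtain ⟨B, hB⟩ := exists_abs_taylorDefect_le_of_two_mul_lt p
  set A := (p + 4) * 3 ^ (p - 2)
  refine ⟨|A| + |B| + 1, by positivity, fun {t r a s} ht hr ha hs hst ↦ ?_⟩
  have hnear : 0 ≤ r ^ p := rpow_nonneg hr p
  have hfar : 0 ≤ t ^ (p - 3) * r ^ 3 := by have := rpow_nonneg ht (p - 3); positivity
  rcases le_or_gt t (2 * r) with htr | htr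
  · have hst' : s ≤ t + r := by nlinarith [abs_le.1 ha]
    calc |taylorDefect p t r a s| ≤ A * r ^ p :=
          abs_taylorDefect_le_of_le_two_mul hp ht hr hs htr ha hst'
      _ ≤ (|A| + |B| + 1) * (r ^ p + t ^ (p - 3) * r ^ 3) := by
          nlinarith [le_abs_self A, abs_nonneg B, abs_nonneg A]
  · calc |taylorDefect p t r a s| ≤ B * (t ^ (p - 3) * r ^ 3) := hB hr htr ha hs hst
      _ ≤ (|A| + |B| + 1) * (r ^ p + t ^ (p - 3) * r ^ 3) := by
          nlinarith [le_abs_self B, abs_nonneg B, abs_nonneg A]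

theorem stmt2 (n : ℕ) (p : ℝ) (hp : 3 < p) :
    ∃ C > (0:ℝ), ∀ x y : EuclideanSpace ℝ (Fin n),
      |‖x + y‖ ^ (p - 2) * (inner ℝ (x + y) y : ℝ)
        - ‖x‖ ^ (p - 2) * (inner ℝ (x + y) y : ℝ)
        - (p - 2) * ‖x‖ ^ (p - 4) * (inner ℝ x y : ℝ) ^ 2|
        ≤ C * (‖y‖ ^ p + ‖x‖ ^ (p - 3) * ‖y‖ ^ (3:ℝ)) := by
  obtain ⟨C, hC, hbound⟩ := exists_abs_taylorDefect_le (p := p) (by linarith)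
  refine ⟨C, hC, fun x y ↦ ?_⟩
  rw [inner_add_left, real_inner_self_eq_norm_sq, rpow_ofNat]
  exact hbound (norm_nonneg x) (norm_nonneg y) (abs_real_inner_le_norm x y) (norm_nonneg _)
    (norm_add_sq_real x y)
end

section
/- Let 2 < p ≤ 3. Then there exists a constant C > 0, depending only on p and n, such that for all vectors x, y ∈ ℝⁿ: | |x+y|^{p-2} (x+y)·y − |y|^p − |x|^{p-2} x·y | ≤ C|x|^{p-2}|y|². -/
/-!
Write `α = p - 2`, `u = ‖x + y‖`, `a = ‖x‖`, `b = ‖y‖`. Since `⟪x + y, y⟫ = ⟪x, y⟫ + b²` and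
`b ^ p = b ^ α * b²`, the quantity equals `(u ^ α - a ^ α) ⟪x, y⟫ + (u ^ α - b ^ α) b²`.
For `0 ≤ α ≤ 1`, subadditivity of `t ↦ t ^ α` gives `|u ^ α - b ^ α| ≤ |u - b| ^ α ≤ a ^ α`, and
`w ^ (1 - α) v ^ α ≥ v` for `v ≤ w` gives `a ^ (1 - α) |u ^ α - a ^ α| ≤ |u - a| ≤ b`; with
`|⟪x, y⟫| ≤ a b` both terms are at most `a ^ α b²`, so `C = 2` works.
-/

open RealInnerProductSpace

namespace Real

variable {α : ℝ}

theorem abs_rpow_sub_rpow_le_abs_sub_rpow (hα0 : 0 ≤ α) (hα1 : α ≤ 1) {u v : ℝ}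
    (hu : 0 ≤ u) (hv : 0 ≤ v) : |u ^ α - v ^ α| ≤ |u - v| ^ α := by
  wlog hvu : v ≤ u generalizing u v
  · rw [abs_sub_comm, abs_sub_comm u]
    exact this hv hu (le_of_not_ge hvu)
  have hsub := rpow_add_le_add_rpow (sub_nonneg.2 hvu) hv hα0 hα1
  rw [sub_add_cancel] at hsub
  rw [abs_of_nonneg (sub_nonneg.2 (rpow_le_rpow hv hvu hα0)), abs_of_nonneg (sub_nonneg.2 hvu)]
  linarith

theorem rpow_one_sub_mul_rpow_sub_rpow_le (hα1 : α ≤ 1) {v w : ℝ}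
    (hv : 0 ≤ v) (hvw : v ≤ w) : w ^ (1 - α) * (w ^ α - v ^ α) ≤ w - v := by
  have hsplit : ∀ t : ℝ, 0 ≤ t → t ^ (1 - α) * t ^ α = t := fun t ht => by
    rw [← rpow_add' ht (by norm_num), sub_add_cancel, rpow_one]
  have hweight : v ≤ w ^ (1 - α) * v ^ α := by
    calc v = v ^ (1 - α) * v ^ α := (hsplit v hv).symm
      _ ≤ w ^ (1 - α) * v ^ α := by gcongr
  rw [mul_sub, hsplit w (hv.trans hvw)]
  linarith

theorem rpow_one_sub_mul_abs_rpow_sub_rpow_le (hα0 : 0 ≤ α) (hα1 : α ≤ 1) {a u : ℝ}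
    (ha : 0 ≤ a) (hu : 0 ≤ u) : a ^ (1 - α) * |u ^ α - a ^ α| ≤ |u - a| := by
  rcases le_total a u with hau | hua
  · rw [abs_of_nonneg (sub_nonneg.2 (rpow_le_rpow ha hau hα0)), abs_of_nonneg (sub_nonneg.2 hau)]
    calc a ^ (1 - α) * (u ^ α - a ^ α)
        ≤ u ^ (1 - α) * (u ^ α - a ^ α) := by
          gcongr
          exact sub_nonneg.2 (rpow_le_rpow ha hau hα0)
      _ ≤ u - a := rpow_one_sub_mul_rpow_sub_rpow_le hα1 ha hau
  · rw [abs_sub_comm, abs_of_nonneg (sub_nonneg.2 (rpow_le_rpow hu hua hα0)),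
      abs_sub_comm, abs_of_nonneg (sub_nonneg.2 hua)]
    exact rpow_one_sub_mul_rpow_sub_rpow_le hα1 hu hua

end Real

section InnerProductSpace

variable {E : Type*} [NormedAddCommGroup E] [InnerProductSpace ℝ E]

theorem norm_add_rpow_mul_inner_sub_eq {α : ℝ} (hα : α + 2 ≠ 0) (x y : E) :
    ‖x + y‖ ^ α * ⟪x + y, y⟫ - ‖y‖ ^ (α + 2) - ‖x‖ ^ α * ⟪x, y⟫
      = (‖x + y‖ ^ α - ‖x‖ ^ α) * ⟪x, y⟫ + (‖x + y‖ ^ α - ‖y‖ ^ α) * ‖y‖ ^ 2 := by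
  rw [inner_add_left, real_inner_self_eq_norm_sq,
    Real.rpow_add' (norm_nonneg y) hα, Real.rpow_two]
  ring

theorem abs_norm_add_rpow_mul_inner_sub_le_s3 {α : ℝ} (hα0 : 0 ≤ α) (hα1 : α ≤ 1) (x y : E) :
    |‖x + y‖ ^ α * ⟪x + y, y⟫ - ‖y‖ ^ (α + 2) - ‖x‖ ^ α * ⟪x, y⟫|
      ≤ 2 * (‖x‖ ^ α * ‖y‖ ^ 2) := by
  set a := ‖x‖
  set b := ‖y‖
  set u := ‖x + y‖
  have ha : 0 ≤ a := norm_nonneg x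
  have hb : 0 ≤ b := norm_nonneg y
  have hu : 0 ≤ u := norm_nonneg _
  have hinner : |⟪x, y⟫| ≤ a * b := abs_real_inner_le_norm x y
  have hua : |u - a| ≤ b := by
    simpa only [add_sub_cancel_left] using abs_norm_sub_norm_le (x + y) x
  have hub : |u - b| ≤ a := by
    simpa only [add_sub_cancel_right] using abs_norm_sub_norm_le (x + y) y
  have hfirst : a * |u ^ α - a ^ α| ≤ a ^ α * b := by
    calc a * |u ^ α - a ^ α| = a ^ α * (a ^ (1 - α) * |u ^ α - a ^ α|) := by
          rw [← mul_assoc, ← Real.rpow_add' ha (by norm_num), add_sub_cancel, Real.rpow_one]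
      _ ≤ a ^ α * b := by
          gcongr
          exact (Real.rpow_one_sub_mul_abs_rpow_sub_rpow_le hα0 hα1 ha hu).trans hua
  have hsecond : |u ^ α - b ^ α| ≤ a ^ α :=
    (Real.abs_rpow_sub_rpow_le_abs_sub_rpow hα0 hα1 hu hb).trans
      (Real.rpow_le_rpow (abs_nonneg _) hub hα0)
  rw [norm_add_rpow_mul_inner_sub_eq (by linarith : 0 < α + 2).ne']
  calc |(u ^ α - a ^ α) * ⟪x, y⟫ + (u ^ α - b ^ α) * b ^ 2|
      ≤ |u ^ α - a ^ α| * (a * b) + |u ^ α - b ^ α| * b ^ 2 := by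
        refine (abs_add_le _ _).trans ?_
        rw [abs_mul, abs_mul, abs_of_nonneg (sq_nonneg b)]
        gcongr
    _ ≤ a ^ α * b * b + a ^ α * b ^ 2 := by
        rw [← mul_assoc, mul_comm _ a]
        gcongr
    _ = 2 * (a ^ α * b ^ 2) := by ring

end InnerProductSpace

theorem stmt3 (n : ℕ) (p : ℝ) (hp : 2 < p) (hp' : p ≤ 3) :
    ∃ C > (0:ℝ), ∀ x y : EuclideanSpace ℝ (Fin n),
      |‖x + y‖ ^ (p - 2) * (inner ℝ (x + y) y : ℝ) - ‖y‖ ^ p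
        - ‖x‖ ^ (p - 2) * (inner ℝ x y : ℝ)| ≤ C * (‖x‖ ^ (p - 2) * ‖y‖ ^ (2:ℝ)) := by
  refine ⟨2, two_pos, fun x y => ?_⟩
  have h := abs_norm_add_rpow_mul_inner_sub_le_s3 (by linarith : 0 ≤ p - 2) (by linarith) x y
  rwa [sub_add_cancel, ← Real.rpow_two] at h
end

section
/- Let p > 3. Then there exists a constant C > 0, depending only on p and n, such that for all vectors x, y ∈ ℝⁿ: | |x+y|^{p-2} (x+y)·y − |y|^p − |x|^{p-2} x·y | ≤ C(|x|^{p-2}|y|² + |x||y|^{p-1}). -/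
/-!
With `q = p - 2` and `f v = ‖v‖ ^ q • v`, the quantity inside the absolute value is
`⟪f (x + y) - f x - f y, y⟫`. Bernoulli's inequality makes `f` locally Lipschitz:
`‖f a - f b‖ ≤ (q + 1) max ‖a‖ ‖b‖ ^ q ‖a - b‖`. Comparing `f (x + y)` with `f` of the longer of
`x`, `y` then bounds `‖f (x + y) - f x - f y‖` by a constant times `‖longer‖ ^ q ‖shorter‖`,
and Cauchy–Schwarz gives the two terms of the bound according to which of `x`, `y` is longer.
-/

open Real

lemma rpow_sub_rpow_le_mul_rpow_sub_one_mul {q s t : ℝ} (hq : 1 ≤ q) (ht : 0 ≤ t) (hts : t ≤ s) :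
    s ^ q - t ^ q ≤ q * s ^ (q - 1) * (s - t) := by
  obtain rfl | hs := (ht.trans hts).eq_or_lt
  · obtain rfl := le_antisymm hts ht
    simp
  -- Bernoulli's inequality at `t / s - 1` is the tangent line of `u ↦ u ^ q` at `s`.
  have hbern := one_add_mul_self_le_rpow_one_add (s := t / s - 1)
    (by linarith [div_nonneg ht hs.le]) hq
  rw [add_sub_cancel, div_rpow ht hs.le, le_div_iff₀ (by positivity)] at hbern
  have hts' : q * s ^ (q - 1) * (s - t) = q * s ^ q * (1 - t / s) := by
    rw [rpow_sub_one hs.ne']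
    field_simp
  rw [hts']
  linear_combination hbern

lemma abs_rpow_sub_rpow_le {q s t : ℝ} (hq : 1 ≤ q) (hs : 0 ≤ s) (ht : 0 ≤ t) :
    |s ^ q - t ^ q| ≤ q * max s t ^ (q - 1) * |s - t| := by
  wlog hts : t ≤ s generalizing s t
  · rw [abs_sub_comm, abs_sub_comm s, max_comm]
    exact this ht hs (le_of_not_ge hts)
  rw [max_eq_left hts, abs_of_nonneg (sub_nonneg.2 (rpow_le_rpow ht hts (by linarith))),
    abs_of_nonneg (sub_nonneg.2 hts)]
  exact rpow_sub_rpow_le_mul_rpow_sub_one_mul hq ht hts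

lemma norm_rpow_smul_sub_rpow_smul_le {E : Type*} [SeminormedAddCommGroup E] [NormedSpace ℝ E]
    {q : ℝ} (hq : 1 ≤ q) (a b : E) :
    ‖‖a‖ ^ q • a - ‖b‖ ^ q • b‖ ≤ (q + 1) * max ‖a‖ ‖b‖ ^ q * ‖a - b‖ := by
  set m := max ‖a‖ ‖b‖
  have hm : 0 ≤ m := (norm_nonneg a).trans (le_max_left _ _)
  have hsplit : ‖a‖ ^ q • a - ‖b‖ ^ q • b = ‖a‖ ^ q • (a - b) + (‖a‖ ^ q - ‖b‖ ^ q) • b := by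
    rw [smul_sub, sub_smul]
    abel
  have hfirst : ‖‖a‖ ^ q • (a - b)‖ ≤ m ^ q * ‖a - b‖ := by
    rw [norm_smul, norm_of_nonneg (by positivity)]
    gcongr
    exact le_max_left _ _
  have hsecond : ‖(‖a‖ ^ q - ‖b‖ ^ q) • b‖ ≤ q * m ^ q * ‖a - b‖ :=
    calc ‖(‖a‖ ^ q - ‖b‖ ^ q) • b‖ = |‖a‖ ^ q - ‖b‖ ^ q| * ‖b‖ := by
          rw [norm_smul, Real.norm_eq_abs]
      _ ≤ (q * m ^ (q - 1) * ‖a - b‖) * m := by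
          gcongr
          · exact (abs_rpow_sub_rpow_le hq (norm_nonneg a) (norm_nonneg b)).trans
              (by gcongr; exact abs_norm_sub_norm_le a b)
          · exact le_max_right _ _
      _ = q * m ^ q * ‖a - b‖ := by
          rw [show m ^ q = m ^ (q - 1) * m by
            rw [← rpow_add_one' hm (by linarith), sub_add_cancel]]
          ring
  calc ‖‖a‖ ^ q • a - ‖b‖ ^ q • b‖
      ≤ ‖‖a‖ ^ q • (a - b)‖ + ‖(‖a‖ ^ q - ‖b‖ ^ q) • b‖ := hsplit ▸ norm_add_le _ _
    _ ≤ m ^ q * ‖a - b‖ + q * m ^ q * ‖a - b‖ := add_le_add hfirst hsecond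
    _ = (q + 1) * m ^ q * ‖a - b‖ := by ring

lemma norm_rpow_smul_add_sub_le {E : Type*} [SeminormedAddCommGroup E] [NormedSpace ℝ E]
    {q : ℝ} (hq : 1 ≤ q) {u v : E} (huv : ‖u‖ ≤ ‖v‖) :
    ‖‖u + v‖ ^ q • (u + v) - ‖u‖ ^ q • u - ‖v‖ ^ q • v‖
      ≤ ((q + 1) * 2 ^ q + 1) * (‖v‖ ^ q * ‖u‖) := by
  have hmax : max ‖u + v‖ ‖v‖ ≤ 2 * ‖v‖ :=
    max_le (by linarith [norm_add_le u v]) (by linarith [norm_nonneg v])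
  have hmain : ‖‖u + v‖ ^ q • (u + v) - ‖v‖ ^ q • v‖ ≤ (q + 1) * 2 ^ q * (‖v‖ ^ q * ‖u‖) :=
    calc _ ≤ (q + 1) * max ‖u + v‖ ‖v‖ ^ q * ‖u + v - v‖ :=
          norm_rpow_smul_sub_rpow_smul_le hq _ _
      _ ≤ (q + 1) * (2 * ‖v‖) ^ q * ‖u‖ := by
          rw [add_sub_cancel_right]
          gcongr
      _ = (q + 1) * 2 ^ q * (‖v‖ ^ q * ‖u‖) := by
          rw [mul_rpow zero_le_two (norm_nonneg v)]
          ring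
  have hsmall : ‖‖u‖ ^ q • u‖ ≤ ‖v‖ ^ q * ‖u‖ := by
    rw [norm_smul, norm_of_nonneg (by positivity)]
    gcongr
  calc _ = ‖(‖u + v‖ ^ q • (u + v) - ‖v‖ ^ q • v) - ‖u‖ ^ q • u‖ := by
        rw [sub_right_comm]
    _ ≤ (q + 1) * 2 ^ q * (‖v‖ ^ q * ‖u‖) + ‖v‖ ^ q * ‖u‖ :=
        (norm_sub_le _ _).trans (add_le_add hmain hsmall)
    _ = ((q + 1) * 2 ^ q + 1) * (‖v‖ ^ q * ‖u‖) := by ring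

lemma inner_rpow_smul_add_sub {E : Type*} [SeminormedAddCommGroup E] [InnerProductSpace ℝ E]
    {p : ℝ} (hp : p ≠ 0) (x y : E) :
    ‖x + y‖ ^ (p - 2) * inner ℝ (x + y) y - ‖y‖ ^ p - ‖x‖ ^ (p - 2) * inner ℝ x y
      = inner ℝ (‖x + y‖ ^ (p - 2) • (x + y) - ‖x‖ ^ (p - 2) • x - ‖y‖ ^ (p - 2) • y) y := by
  have hpow : ‖y‖ ^ p = ‖y‖ ^ (p - 2) * ‖y‖ ^ (2 : ℝ) := by
    rw [← rpow_add' (norm_nonneg y) (by simpa using hp), sub_add_cancel]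
  simp only [inner_sub_left, real_inner_smul_left, real_inner_self_eq_norm_sq, hpow, rpow_two]
  ring

lemma abs_inner_rpow_smul_add_sub_le {E : Type*} [SeminormedAddCommGroup E]
    [InnerProductSpace ℝ E] {q : ℝ} (hq : 1 ≤ q) (x y : E) :
    |inner ℝ (‖x + y‖ ^ q • (x + y) - ‖x‖ ^ q • x - ‖y‖ ^ q • y) y|
      ≤ ((q + 1) * 2 ^ q + 1) * (‖x‖ ^ q * ‖y‖ ^ 2 + ‖x‖ * (‖y‖ ^ q * ‖y‖)) := by
  set K := (q + 1) * 2 ^ q + 1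
  set D := ‖x + y‖ ^ q • (x + y) - ‖x‖ ^ q • x - ‖y‖ ^ q • y
  refine (abs_real_inner_le_norm D y).trans ?_
  rcases le_total ‖x‖ ‖y‖ with hxy | hyx
  · have hD : ‖D‖ ≤ K * (‖y‖ ^ q * ‖x‖) := norm_rpow_smul_add_sub_le hq hxy
    calc ‖D‖ * ‖y‖ ≤ K * (‖y‖ ^ q * ‖x‖) * ‖y‖ := by gcongr
      _ = K * (‖x‖ * (‖y‖ ^ q * ‖y‖)) := by ring
      _ ≤ _ := by gcongr; exact le_add_of_nonneg_left (by positivity)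
  · have hD : ‖D‖ ≤ K * (‖x‖ ^ q * ‖y‖) := by
      simpa only [D, add_comm y x, sub_right_comm] using norm_rpow_smul_add_sub_le hq hyx
    calc ‖D‖ * ‖y‖ ≤ K * (‖x‖ ^ q * ‖y‖) * ‖y‖ := by gcongr
      _ = K * (‖x‖ ^ q * ‖y‖ ^ 2) := by ring
      _ ≤ _ := by gcongr; exact le_add_of_nonneg_right (by positivity)

theorem stmt4 (n : ℕ) (p : ℝ) (hp : 3 < p) :
    ∃ C > (0:ℝ), ∀ x y : EuclideanSpace ℝ (Fin n),
      |‖x + y‖ ^ (p - 2) * (inner ℝ (x + y) y : ℝ) - ‖y‖ ^ p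
        - ‖x‖ ^ (p - 2) * (inner ℝ x y : ℝ)|
        ≤ C * (‖x‖ ^ (p - 2) * ‖y‖ ^ (2:ℝ) + ‖x‖ * ‖y‖ ^ (p - 1)) := by
  have hq : 1 ≤ p - 2 := by linarith
  refine ⟨(p - 2 + 1) * 2 ^ (p - 2) + 1, by positivity, fun x y => ?_⟩
  have hpow : ‖y‖ ^ (p - 1) = ‖y‖ ^ (p - 2) * ‖y‖ := by
    rw [← rpow_add_one' (norm_nonneg y) (by linarith), sub_add]
    norm_num
  rw [inner_rpow_smul_add_sub (by linarith) x y, hpow, rpow_two]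
  exact abs_inner_rpow_smul_add_sub_le hq x y
end

section
/- Let 2 < q ≤ 3. Then there exists a constant C > 0, depending only on q, such that for all real numbers a, b: | (a+b)|a+b|^{q-2} − a|a|^{q-2} − (q−1)|a|^{q-2} b | ≤ C|b|^{q-1}. -/
/-!
The map `φ x = x * |x| ^ (q - 2)` is differentiable with `φ' x = (q - 1) * |x| ^ (q - 2)`, and
`φ'` is `(q - 2)`-Hölder because `t ↦ t ^ (q - 2)` is subadditive on `[0, ∞)` when
`0 ≤ q - 2 ≤ 1`. The mean value theorem applied to the first-order Taylor remainder of `φ` at `a`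
then bounds it by `(q - 1) * |b| ^ (q - 1)`.
-/

open Real Set

theorem abs_abs_rpow_sub_abs_rpow_le {e : ℝ} (he₀ : 0 ≤ e) (he₁ : e ≤ 1) (x y : ℝ) :
    |(|x| ^ e - |y| ^ e)| ≤ |x - y| ^ e := by
  have key (u v : ℝ) : |u| ^ e ≤ |v| ^ e + |u - v| ^ e :=
    calc |u| ^ e ≤ (|v| + |u - v|) ^ e := by
          gcongr
          simpa using abs_add_le v (u - v)
      _ ≤ |v| ^ e + |u - v| ^ e := rpow_add_le_add_rpow (abs_nonneg _) (abs_nonneg _) he₀ he₁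
  rw [abs_sub_le_iff]
  constructor
  · linarith [key x y]
  · linarith [abs_sub_comm y x ▸ key y x]

theorem hasDerivAt_mul_abs_rpow {s : ℝ} (hs : 0 ≤ s) (x : ℝ) :
    HasDerivAt (fun x => x * |x| ^ s) ((s + 1) * |x| ^ s) x := by
  have hcont : Continuous fun x : ℝ => |x| ^ s := continuous_abs.rpow_const fun _ => Or.inr hs
  refine hasDerivAt_of_hasDerivAt_of_ne' (x := 0) (fun y hy => ?_)
    (continuous_id.mul hcont).continuousAt (hcont.const_mul _).continuousAt x
  have hpow := (hasDerivAt_abs hy).rpow_const (p := s) (Or.inl (abs_ne_zero.2 hy))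
  refine ((hasDerivAt_id y).mul hpow).congr_deriv ?_
  have hsign : y * (SignType.sign y : ℝ) = |y| := by
    rcases hy.lt_or_gt with h | h <;> simp [h, abs_of_neg, abs_of_pos]
  rw [rpow_sub_one (abs_ne_zero.2 hy), id]
  field_simp
  linear_combination s * hsign

theorem abs_sub_sub_mul_le_of_abs_deriv_sub_le {f f' : ℝ → ℝ} {K e : ℝ}
    (hf : ∀ x, HasDerivAt f (f' x) x) (hK : 0 ≤ K) (he : 0 ≤ e)
    (hf' : ∀ x y, |f' x - f' y| ≤ K * |x - y| ^ e) (a b : ℝ) :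
    |f (a + b) - f a - f' a * b| ≤ K * |b| ^ (e + 1) := by
  have hderiv (t : ℝ) : HasDerivAt (fun t => f (a + t) - f' a * t) (f' (a + t) - f' a) t :=
    (((hf (a + t)).comp_const_add a t).sub ((hasDerivAt_id t).const_mul (f' a))).congr_deriv
      (by simp)
  have hbound : ∀ t ∈ uIcc 0 b, ‖f' (a + t) - f' a‖ ≤ K * |b| ^ e := fun t ht =>
    calc ‖f' (a + t) - f' a‖ ≤ K * |a + t - a| ^ e := hf' _ _
      _ ≤ K * |b| ^ e := by
          rw [add_sub_cancel_left]
          gcongr K * ?_ ^ e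
          simpa using abs_sub_left_of_mem_uIcc ht
  have hmvt := (convex_uIcc 0 b).norm_image_sub_le_of_norm_hasDerivWithin_le
    (fun t _ => (hderiv t).hasDerivWithinAt) hbound left_mem_uIcc right_mem_uIcc
  simp only [add_zero, mul_zero, sub_zero, Real.norm_eq_abs] at hmvt
  rw [rpow_add_one' (abs_nonneg b) (by positivity), ← mul_assoc]
  convert hmvt using 2
  ring

theorem stmt5 (q : ℝ) (h1 : 2 < q) (h2 : q ≤ 3) :
    ∃ C > (0:ℝ), ∀ a b : ℝ,
      |(a + b) * |a + b| ^ (q - 2) - a * |a| ^ (q - 2) - (q - 1) * |a| ^ (q - 2) * b|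
        ≤ C * |b| ^ (q - 1) := by
  have hs : 0 ≤ q - 2 := by linarith
  have hq : q - 2 + 1 = q - 1 := by ring
  have holder (x y : ℝ) :
      |(q - 1) * |x| ^ (q - 2) - (q - 1) * |y| ^ (q - 2)| ≤ (q - 1) * |x - y| ^ (q - 2) := by
    rw [← mul_sub, abs_mul, abs_of_pos (by linarith)]
    exact mul_le_mul_of_nonneg_left (abs_abs_rpow_sub_abs_rpow_le hs (by linarith) x y)
      (by linarith)
  refine ⟨q - 1, by linarith, fun a b => ?_⟩
  have h := abs_sub_sub_mul_le_of_abs_deriv_sub_le (hq ▸ hasDerivAt_mul_abs_rpow hs)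
    (by linarith) hs holder a b
  rwa [hq] at h
end

section
/- Let q > 3. Then there exists a constant C > 0, depending only on q, such that for all real numbers a, b: | (a+b)|a+b|^{q-2} − a|a|^{q-2} − (q−1)|a|^{q-2} b | ≤ C(|b|^{q-1} + |a|^{q-3}b²). -/
/-!
Write `p = q - 2 > 1` and `f x = x |x| ^ p`, so that `f' x = (p + 1) |x| ^ p` and
`|f'' x| = (p + 1) p |x| ^ (p - 1)`; the expression is `f (a + b) - f a - f' a b`.
If `|a| ≤ |b|`, each of its three terms is at most a multiple of `|b| ^ (p + 1)`, since
`|a|, |a + b| ≤ 2 |b|`. If `|b| ≤ |a|`, the second-order Taylor bound applies: on the segment from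
`a` to `a + b` we have `|x| ≤ 2 |a|`, and `p - 1 > 0` makes `|f''|` at most a multiple of
`|a| ^ (p - 1)` there.
-/

open Set
open scoped Interval

theorem abs_sub_sub_deriv_mul_le {f f' f'' : ℝ → ℝ} {x y M : ℝ}
    (hf : ∀ t ∈ [[x, y]], HasDerivAt f (f' t) t) (hf' : ∀ t ∈ [[x, y]], HasDerivAt f' (f'' t) t)
    (hM : ∀ t ∈ [[x, y]], |f'' t| ≤ M) :
    |f y - f x - f' x * (y - x)| ≤ M * (y - x) ^ 2 := by
  have hx : x ∈ [[x, y]] := left_mem_uIcc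
  have hM₀ : 0 ≤ M := (abs_nonneg _).trans (hM x hx)
  have hf'_lip : ∀ t ∈ [[x, y]], |f' t - f' x| ≤ M * |y - x| := fun t ht =>
    calc |f' t - f' x| ≤ M * |t - x| :=
          (convex_uIcc x y).norm_image_sub_le_of_norm_hasDerivWithin_le
            (fun s hs => (hf' s hs).hasDerivWithinAt) hM hx ht
      _ ≤ M * |y - x| := mul_le_mul_of_nonneg_left (abs_sub_left_of_mem_uIcc ht) hM₀
  have hg : ∀ t ∈ [[x, y]], HasDerivWithinAt (fun s => f s - s * f' x) (f' t - f' x) [[x, y]] t :=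
    fun t ht => ((hf t ht).sub (hasDerivAt_mul_const (f' x))).hasDerivWithinAt
  calc |f y - f x - f' x * (y - x)| = |(f y - y * f' x) - (f x - x * f' x)| := by ring_nf
    _ ≤ M * |y - x| * |y - x| :=
        (convex_uIcc x y).norm_image_sub_le_of_norm_hasDerivWithin_le hg hf'_lip hx right_mem_uIcc
    _ = M * (y - x) ^ 2 := by rw [mul_assoc, abs_mul_abs_self, sq]

namespace Real

theorem abs_rpow_sub_two_mul_sq {p : ℝ} (hp : 1 < p) (x : ℝ) :
    |x| ^ (p - 2) * x ^ 2 = |x| ^ p := by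
  rw [← sq_abs, sq, ← mul_assoc, ← rpow_add_one' (abs_nonneg x) (by linarith),
    ← rpow_add_one' (abs_nonneg x) (by linarith)]
  ring_nf

theorem abs_mul_abs_rpow {p : ℝ} (hp : 0 ≤ p) (x : ℝ) : |x * |x| ^ p| = |x| ^ (p + 1) := by
  rw [abs_mul, abs_of_nonneg (rpow_nonneg (abs_nonneg x) p),
    rpow_add_one' (abs_nonneg x) (by linarith), mul_comm]

theorem hasDerivAt_mul_abs_rpow {p : ℝ} (hp : 1 < p) (x : ℝ) :
    HasDerivAt (fun x => x * |x| ^ p) ((p + 1) * |x| ^ p) x := by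
  refine ((hasDerivAt_id x).mul (hasDerivAt_abs_rpow x hp)).congr_deriv ?_
  rw [← abs_rpow_sub_two_mul_sq hp x, id]
  ring

theorem abs_deriv_abs_rpow {p : ℝ} (hp : 1 < p) (x : ℝ) :
    |p * |x| ^ (p - 2) * x| = p * |x| ^ (p - 1) := by
  rw [abs_mul, abs_mul, abs_of_pos (by linarith), abs_of_nonneg (by positivity), mul_assoc,
    ← rpow_add_one' (abs_nonneg x) (by linarith)]
  ring_nf

theorem abs_mul_abs_rpow_sub_taylor_le_of_abs_le {p a b : ℝ} (hp : 0 ≤ p) (hab : |a| ≤ |b|) :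
    |(a + b) * |a + b| ^ p - a * |a| ^ p - (p + 1) * |a| ^ p * b| ≤
      (p + 3) * 2 ^ (p + 1) * |b| ^ (p + 1) := by
  set B := 2 * |b|
  have hB : 0 ≤ B := by positivity
  have hsum : |(a + b) * |a + b| ^ p| ≤ B ^ (p + 1) := by
    rw [abs_mul_abs_rpow hp]
    exact rpow_le_rpow (abs_nonneg _) ((abs_add_le a b).trans (by linarith)) (by linarith)
  have hfirst : |a * |a| ^ p| ≤ B ^ (p + 1) := by
    rw [abs_mul_abs_rpow hp]
    exact rpow_le_rpow (abs_nonneg _) (by linarith [abs_nonneg b]) (by linarith)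
  have hlinear : |(p + 1) * |a| ^ p * b| ≤ (p + 1) * B ^ (p + 1) := by
    rw [abs_mul, abs_mul, abs_of_pos (by linarith : 0 < p + 1),
      abs_of_nonneg (rpow_nonneg (abs_nonneg a) p), mul_assoc, rpow_add_one' hB (by linarith)]
    gcongr <;> linarith [abs_nonneg b]
  calc |(a + b) * |a + b| ^ p - a * |a| ^ p - (p + 1) * |a| ^ p * b|
      ≤ |(a + b) * |a + b| ^ p| + |a * |a| ^ p| + |(p + 1) * |a| ^ p * b| :=
        (abs_sub _ _).trans (by gcongr; exact abs_sub _ _)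
    _ ≤ (p + 3) * B ^ (p + 1) := by linarith
    _ = (p + 3) * 2 ^ (p + 1) * |b| ^ (p + 1) := by
        rw [mul_rpow zero_le_two (abs_nonneg b), mul_assoc]

theorem abs_mul_abs_rpow_sub_taylor_le_of_le_abs {p a b : ℝ} (hp : 1 < p) (hba : |b| ≤ |a|) :
    |(a + b) * |a + b| ^ p - a * |a| ^ p - (p + 1) * |a| ^ p * b| ≤
      (p + 1) * p * 2 ^ (p - 1) * |a| ^ (p - 1) * b ^ 2 := by
  have hbound : ∀ t ∈ [[a, a + b]], |(p + 1) * (p * |t| ^ (p - 2) * t)| ≤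
      (p + 1) * p * (2 * |a|) ^ (p - 1) := fun t ht => by
    have ht_le : |t| ≤ 2 * |a| := by
      have := abs_sub_left_of_mem_uIcc ht
      rw [add_sub_cancel_left] at this
      linarith [abs_sub_abs_le_abs_sub t a]
    rw [abs_mul, abs_of_pos (by linarith : 0 < p + 1), abs_deriv_abs_rpow hp, mul_assoc]
    gcongr
  have htaylor := abs_sub_sub_deriv_mul_le (f := fun x => x * |x| ^ p) (f' := fun x => (p + 1) * |x| ^ p)
    (fun t _ => hasDerivAt_mul_abs_rpow hp t)
    (fun t _ => (hasDerivAt_abs_rpow t hp).const_mul (p + 1)) hbound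
  rw [add_sub_cancel_left, mul_rpow zero_le_two (abs_nonneg a)] at htaylor
  linarith

theorem exists_abs_mul_abs_rpow_sub_taylor_le {p : ℝ} (hp : 1 < p) :
    ∃ C > 0, ∀ a b : ℝ, |(a + b) * |a + b| ^ p - a * |a| ^ p - (p + 1) * |a| ^ p * b| ≤
      C * (|b| ^ (p + 1) + |a| ^ (p - 1) * b ^ 2) := by
  have h₁ : 0 < (p + 3) * 2 ^ (p + 1) := mul_pos (by linarith) (by positivity)
  have h₂ : 0 ≤ (p + 1) * p * 2 ^ (p - 1) := by positivity
  refine ⟨_, add_pos_of_pos_of_nonneg h₁ h₂, fun a b => ?_⟩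
  have hX : 0 ≤ |b| ^ (p + 1) := by positivity
  have hY : 0 ≤ |a| ^ (p - 1) * b ^ 2 := by positivity
  rcases le_total |a| |b| with hab | hba
  · have := abs_mul_abs_rpow_sub_taylor_le_of_abs_le (zero_le_one.trans hp.le) hab
    nlinarith
  · have := abs_mul_abs_rpow_sub_taylor_le_of_le_abs hp hba
    nlinarith

end Real

theorem stmt6 (q : ℝ) (h1 : 3 < q) :
    ∃ C > (0:ℝ), ∀ a b : ℝ,
      |(a + b) * |a + b| ^ (q - 2) - a * |a| ^ (q - 2) - (q - 1) * |a| ^ (q - 2) * b|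
        ≤ C * (|b| ^ (q - 1) + |a| ^ (q - 3) * b ^ 2) := by
  obtain ⟨C, hC, hbound⟩ := Real.exists_abs_mul_abs_rpow_sub_taylor_le (p := q - 2) (by linarith)
  refine ⟨C, hC, fun a b => ?_⟩
  rw [show q - 1 = q - 2 + 1 by ring, show q - 3 = q - 2 - 1 by ring]
  exact hbound a b
end

section
/- Let n ≥ 2, 1 < p < n, 0 ≤ a < (n−p)/p, a ≤ b < a+1, q = np/(n − p(1+a−b)), and γ = 1+a−b. Define v(x) = A(1 + B|x|^{pγ(n−p−pa)/((p−1)(n−pγ))})^{1 − n/(pγ)} for constants A ∈ ℝ and B > 0. Then ∫_{ℝⁿ} |x|^{−pa} |∇v(x)|^p dx < ∞ and ∫_{ℝⁿ} |x|^{−qb} |v(x)|^q dx < ∞. -/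
/-!
The function `v` is radial, `v x = A φ(‖x‖)` with `φ r = (1 + B r ^ α) ^ β`, `α > 0`, `β < 0`.
Both integrands are bounded by a constant times `‖x‖ ^ s (1 + B ‖x‖ ^ α) ^ z` with `z ≤ 0`, and in
polar coordinates this is integrable as soon as `s > -n` (near the origin) and `s + α z < -n`
(near infinity, where it behaves like `‖x‖ ^ (s + α z)`). The exponents are tuned so that
`α β = -(n - p - p a) / (p - 1)`, and with this identity both decay conditions reduce to
`p / (p - 1) > 1`.
-/

open MeasureTheory Set Real Module

theorem lintegral_ofReal_lt_top_of_ae_le {X : Type*} [MeasurableSpace X] {μ : Measure X}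
    {f g : X → ℝ} (hg : Integrable g μ) (hfg : f ≤ᵐ[μ] g) :
    ∫⁻ x, ENNReal.ofReal (f x) ∂μ < ⊤ :=
  ((lintegral_mono_ae (hfg.mono fun _ h => ENNReal.ofReal_le_ofReal h)).trans
    (lintegral_ofReal_le_lintegral_enorm g)).trans_lt hg.2

theorem integrableOn_Ioi_rpow_mul_one_add_rpow_rpow {s α z B : ℝ} (hB : 0 < B) (hz : z ≤ 0)
    (hs : -1 < s) (hsz : s + α * z < -1) :
    IntegrableOn (fun r : ℝ => r ^ s * (1 + B * r ^ α) ^ z) (Ioi 0) := by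
  have hmeas : Measurable fun r : ℝ => r ^ s * (1 + B * r ^ α) ^ z := by fun_prop
  rw [← Ioc_union_Ioi_eq_Ioi zero_le_one]
  refine IntegrableOn.union ?_ ?_
  · have hpow : IntegrableOn (fun r : ℝ => r ^ s) (Ioc 0 1) :=
      (intervalIntegrable_iff_integrableOn_Ioc_of_le zero_le_one).1
        (intervalIntegral.intervalIntegrable_rpow' hs)
    refine hpow.mono' hmeas.aestronglyMeasurable
      (ae_restrict_of_forall_mem measurableSet_Ioc fun r ⟨hr, _⟩ => ?_)
    have hbase : 1 ≤ 1 + B * r ^ α := by have := rpow_pos_of_pos hr α; nlinarith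
    rw [norm_of_nonneg (by positivity)]
    exact mul_le_of_le_one_right (by positivity) (rpow_le_one_of_one_le_of_nonpos hbase hz)
  · refine ((integrableOn_Ioi_rpow_of_lt hsz one_pos).const_mul (B ^ z)).mono'
      hmeas.aestronglyMeasurable (ae_restrict_of_forall_mem measurableSet_Ioi fun r hr => ?_)
    have hr : (0 : ℝ) < r := one_pos.trans hr
    rw [norm_of_nonneg (by positivity)]
    calc r ^ s * (1 + B * r ^ α) ^ z ≤ r ^ s * (B * r ^ α) ^ z := by
          refine mul_le_mul_of_nonneg_left ?_ (by positivity)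
          exact rpow_le_rpow_of_nonpos (by positivity) (by linarith) hz
      _ = B ^ z * r ^ (s + α * z) := by
          rw [mul_rpow hB.le (by positivity), ← rpow_mul hr.le, rpow_add hr]; ring

theorem integrable_norm_rpow_mul_one_add_rpow_rpow {E : Type*} [NormedAddCommGroup E]
    [NormedSpace ℝ E] [Nontrivial E] [FiniteDimensional ℝ E] [MeasurableSpace E] [BorelSpace E]
    (μ : Measure E) [μ.IsAddHaarMeasure] {s α z B : ℝ} (hB : 0 < B) (hz : z ≤ 0)
    (hs : -(finrank ℝ E : ℝ) < s) (hsz : s + α * z < -(finrank ℝ E : ℝ)) :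
    Integrable (fun x : E => ‖x‖ ^ s * (1 + B * ‖x‖ ^ α) ^ z) μ := by
  have hd : ((finrank ℝ E - 1 : ℕ) : ℝ) = finrank ℝ E - 1 := by
    rw [Nat.cast_sub finrank_pos, Nat.cast_one]
  rw [integrable_fun_norm_addHaar μ (f := fun r => r ^ s * (1 + B * r ^ α) ^ z)]
  refine (integrableOn_Ioi_rpow_mul_one_add_rpow_rpow (s := (finrank ℝ E - 1 : ℕ) + s) hB hz
    (by linarith) (by linarith)).congr_fun (fun r (hr : 0 < r) => ?_) measurableSet_Ioi
  dsimp only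
  rw [smul_eq_mul, rpow_add hr, rpow_natCast, mul_assoc]

theorem norm_fderiv_comp_norm {E : Type*} [NormedAddCommGroup E] [InnerProductSpace ℝ E]
    {g : ℝ → ℝ} {g' : ℝ} {x : E} (hx : x ≠ 0) (hg : HasDerivAt g g' ‖x‖) :
    ‖fderiv ℝ (fun y => g ‖y‖) x‖ = |g'| := by
  have : Nontrivial E := nontrivial_of_ne x 0 hx
  have hnorm : DifferentiableAt ℝ (‖·‖) x := (contDiffAt_norm ℝ hx).differentiableAt one_ne_zero
  have hcomp : HasFDerivAt (fun y => g ‖y‖) (g' • fderiv ℝ (‖·‖) x) x :=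
    hg.comp_hasFDerivAt x hnorm.hasFDerivAt
  rw [hcomp.fderiv, norm_smul, norm_fderiv_norm hnorm, mul_one, Real.norm_eq_abs]

noncomputable def bubbleProfile (A B α β r : ℝ) : ℝ := A * (1 + B * r ^ α) ^ β

section bubbleProfile

variable {A B α β r : ℝ}

theorem hasDerivAt_bubbleProfile (hB : 0 ≤ B) (hr : 0 < r) :
    HasDerivAt (bubbleProfile A B α β)
      (A * β * B * α * r ^ (α - 1) * (1 + B * r ^ α) ^ (β - 1)) r := by
  have hbase : 0 < 1 + B * r ^ α := by positivity
  exact ((((hasDerivAt_rpow_const (Or.inl hr.ne')).const_mul B).const_add 1).rpow_const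
    (Or.inl hbase.ne')).const_mul A |>.congr_deriv (by ring)

theorem rpow_mul_abs_bubbleProfile_rpow (hB : 0 ≤ B) (hr : 0 ≤ r) (c q : ℝ) :
    r ^ c * |bubbleProfile A B α β r| ^ q = |A| ^ q * (r ^ c * (1 + B * r ^ α) ^ (β * q)) := by
  have hbase : 0 < 1 + B * r ^ α := by positivity
  rw [bubbleProfile, abs_mul, abs_of_pos (rpow_pos_of_pos hbase β),
    mul_rpow (abs_nonneg A) (by positivity), ← rpow_mul hbase.le]
  ring

theorem rpow_mul_abs_deriv_bubbleProfile_rpow (hB : 0 ≤ B) (hr : 0 < r) (c p : ℝ) :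
    r ^ c * |A * β * B * α * r ^ (α - 1) * (1 + B * r ^ α) ^ (β - 1)| ^ p =
      |A * β * B * α| ^ p * (r ^ (c + (α - 1) * p) * (1 + B * r ^ α) ^ ((β - 1) * p)) := by
  have hbase : 0 < 1 + B * r ^ α := by positivity
  rw [abs_mul, abs_mul, abs_of_pos (rpow_pos_of_pos hr _),
    abs_of_pos (rpow_pos_of_pos hbase _), mul_rpow (by positivity) (by positivity),
    mul_rpow (abs_nonneg _) (by positivity), ← rpow_mul hr.le, ← rpow_mul hbase.le,
    rpow_add hr]
  ring

end bubbleProfile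

theorem lintegral_rpow_mul_abs_bubbleProfile_rpow_lt_top {E : Type*} [NormedAddCommGroup E]
    [NormedSpace ℝ E] [Nontrivial E] [FiniteDimensional ℝ E] [MeasurableSpace E] [BorelSpace E]
    (μ : Measure E) [μ.IsAddHaarMeasure] {A B α β c q : ℝ} (hB : 0 < B)
    (hβq : β * q ≤ 0) (hc : -(finrank ℝ E : ℝ) < c)
    (hdecay : c + α * (β * q) < -(finrank ℝ E : ℝ)) :
    ∫⁻ x, ENNReal.ofReal (‖x‖ ^ c * |bubbleProfile A B α β ‖x‖| ^ q) ∂μ < ⊤ :=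
  lintegral_ofReal_lt_top_of_ae_le
    ((integrable_norm_rpow_mul_one_add_rpow_rpow μ hB hβq hc hdecay).const_mul (|A| ^ q))
    (.of_forall fun x => (rpow_mul_abs_bubbleProfile_rpow hB.le (norm_nonneg x) c q).le)

theorem lintegral_rpow_mul_norm_fderiv_bubbleProfile_rpow_lt_top {E : Type*}
    [NormedAddCommGroup E] [InnerProductSpace ℝ E] [Nontrivial E] [FiniteDimensional ℝ E]
    [MeasurableSpace E] [BorelSpace E] (μ : Measure E) [μ.IsAddHaarMeasure] {A B α β c p : ℝ}
    (hB : 0 < B) (hβp : (β - 1) * p ≤ 0) (hc : -(finrank ℝ E : ℝ) < c + (α - 1) * p)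
    (hdecay : c + (α - 1) * p + α * ((β - 1) * p) < -(finrank ℝ E : ℝ)) :
    ∫⁻ x, ENNReal.ofReal (‖x‖ ^ c * ‖fderiv ℝ (fun y => bubbleProfile A B α β ‖y‖) x‖ ^ p) ∂μ
      < ⊤ := by
  refine lintegral_ofReal_lt_top_of_ae_le
    ((integrable_norm_rpow_mul_one_add_rpow_rpow μ hB hβp hc hdecay).const_mul
      (|A * β * B * α| ^ p)) ((μ.ae_ne 0).mono fun x hx => le_of_eq ?_)
  have hr : 0 < ‖x‖ := norm_pos_iff.2 hx
  dsimp only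
  rw [norm_fderiv_comp_norm hx (hasDerivAt_bubbleProfile hB.le hr),
    rpow_mul_abs_deriv_bubbleProfile_rpow hB.le hr]

theorem bubble_exponents_mul {n p a γ : ℝ} (hp1 : 1 < p) (hγ : 0 < γ) (hnγ : p * γ < n) :
    p * γ * (n - p - p * a) / ((p - 1) * (n - p * γ)) * (1 - n / (p * γ)) =
      -((n - p - p * a) / (p - 1)) := by
  have hp1' : p - 1 ≠ 0 := by linarith
  have hnγ' : n - p * γ ≠ 0 := by linarith
  have hpγ : p * γ ≠ 0 := by positivity
  field_simp
  ring

theorem stmt14_general (n : ℕ) (p a b : ℝ) (hn : 2 ≤ n) (hp1 : 1 < p) (hpn : p < n)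
    (ha : a < ((n : ℝ) - p) / p) (hab : a ≤ b) (hb : b < a + 1)
    (q γ : ℝ) (hq : q = (n : ℝ) * p / ((n : ℝ) - p * (1 + a - b))) (hγ : γ = 1 + a - b)
    (A B : ℝ) (hB : 0 < B)
    (v : EuclideanSpace ℝ (Fin n) → ℝ)
    (hv : ∀ x, v x =
      A * (1 + B * ‖x‖ ^ (p * γ * ((n : ℝ) - p - p * a) / ((p - 1) * ((n : ℝ) - p * γ))))
        ^ (1 - (n : ℝ) / (p * γ))) :
    (∫⁻ x : EuclideanSpace ℝ (Fin n),
        ENNReal.ofReal (‖x‖ ^ (-(p * a)) * ‖fderiv ℝ v x‖ ^ p)) < ⊤ ∧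
    (∫⁻ x : EuclideanSpace ℝ (Fin n),
        ENNReal.ofReal (‖x‖ ^ (-(q * b)) * |v x| ^ q)) < ⊤ := by
  have : Nonempty (Fin n) := ⟨⟨0, by omega⟩⟩
  have hp0 : 0 < p := by linarith
  have hγ0 : 0 < γ := by linarith
  have hD : 0 < (n : ℝ) - p - p * a := by linarith [(lt_div_iff₀ hp0).1 ha]
  have hnγ : (n : ℝ) - p * γ = (n - p - p * a) + p * b := by rw [hγ]; ring
  have hnγ0 : 0 < (n : ℝ) - p * γ := by rw [hnγ]; nlinarith
  have hαβ := bubble_exponents_mul (n := n) (a := a) hp1 hγ0 (by linarith)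
  set α := p * γ * ((n : ℝ) - p - p * a) / ((p - 1) * ((n : ℝ) - p * γ))
  set β := 1 - (n : ℝ) / (p * γ)
  set κ := ((n : ℝ) - p - p * a) / (p - 1)
  have hα : 0 < α := div_pos (mul_pos (mul_pos hp0 hγ0) hD) (mul_pos (by linarith) hnγ0)
  have hβ : β < 0 := sub_neg.2 ((one_lt_div (by positivity)).2 (by linarith))
  have hκ : 0 < κ := div_pos hD (by linarith)
  have hκ_mul : (p - 1) * κ = n - p - p * a := mul_div_cancel₀ _ (by linarith)
  have hq_mul : q * ((n : ℝ) - p * γ) = n * p := by rw [hq, ← hγ]; field_simp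
  have hq0 : 0 < q := by rw [hq, ← hγ]; exact div_pos (mul_pos (by positivity) hp0) hnγ0
  obtain rfl : v = fun x => bubbleProfile A B α β ‖x‖ := funext hv
  constructor
  · refine lintegral_rpow_mul_norm_fderiv_bubbleProfile_rpow_lt_top volume hB
      (mul_nonpos_of_nonpos_of_nonneg (by linarith) hp0.le) ?_ ?_ <;>
      simp only [finrank_euclideanSpace_fin]
    · nlinarith
    · nlinarith
  · refine lintegral_rpow_mul_abs_bubbleProfile_rpow_lt_top volume hB
      (mul_nonpos_of_nonpos_of_nonneg hβ.le hq0.le) ?_ ?_ <;>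
      simp only [finrank_euclideanSpace_fin]
    · nlinarith
    · have key : p * (q * b + κ * q - n) = q * κ := by
        linear_combination q * hκ_mul + hq_mul - q * hnγ
      rw [← mul_assoc, hαβ]
      nlinarith [mul_pos hq0 hκ]

theorem stmt14 (n : ℕ) (p a b : ℝ) (hn : 2 ≤ n) (hp1 : 1 < p) (hpn : p < n)
    (ha0 : 0 ≤ a) (ha : a < ((n : ℝ) - p) / p) (hab : a ≤ b) (hb : b < a + 1)
    (q γ : ℝ) (hq : q = (n : ℝ) * p / ((n : ℝ) - p * (1 + a - b))) (hγ : γ = 1 + a - b)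
    (A B : ℝ) (hB : 0 < B)
    (v : EuclideanSpace ℝ (Fin n) → ℝ)
    (hv : ∀ x, v x =
      A * (1 + B * ‖x‖ ^ (p * γ * ((n : ℝ) - p - p * a) / ((p - 1) * ((n : ℝ) - p * γ))))
        ^ (1 - (n : ℝ) / (p * γ))) :
    (∫⁻ x : EuclideanSpace ℝ (Fin n),
        ENNReal.ofReal (‖x‖ ^ (-(p * a)) * ‖fderiv ℝ v x‖ ^ p)) < ⊤ ∧
    (∫⁻ x : EuclideanSpace ℝ (Fin n),
        ENNReal.ofReal (‖x‖ ^ (-(q * b)) * |v x| ^ q)) < ⊤ :=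
  stmt14_general n p a b hn hp1 hpn ha hab hb q γ hq hγ A B hB v hv
end
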